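/- Let k ≥ 1 and let G be obtained from the complete graph K_{k+2} on vertices {u, v, x₁, …, x_k} by attaching a pendant leaf y_i to x_i for each i ∈ [k]. Then γ_g^t(G) = γ_g^t(G − v) = k + 1 and γ_g^t'(G) = γ_g^t'(G − v) = k + 1. -/

import Mathlib

open Finset

open scoped Classical

variable {V : Type*} [Fintype V]

/-- The set of neighbors of `v` (the vertices that `v` totally dominates). -/
noncomputable def nbr (G : SimpleGraph V) (v : V) : Finset V :=
  Finset.univ.filter (G.Adj v)

/-- The legal moves, given that the vertices of `D` are already totally dominated:
a vertex is playable iff it totally dominates at least one vertex outside `D`. -/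
noncomputable def movesF (G : SimpleGraph V) (D : Finset V) : Finset V :=
  Finset.univ.filter fun v => ¬ nbr G v ⊆ D

lemma movesF_card (G : SimpleGraph V) (D : Finset V) {v : V} (hv : v ∈ movesF G D) :
    ((univ : Finset V) \ (D ∪ nbr G v)).card < ((univ : Finset V) \ D).card := by
  simp only [movesF, mem_filter] at hv
  obtain ⟨u, hu, hu2⟩ := Finset.not_subset.mp hv.2
  apply Finset.card_lt_card
  constructor
  · exact Finset.sdiff_subset_sdiff le_rfl Finset.subset_union_left
  · intro hsub
    have h1 : u ∈ (univ : Finset V) \ D := by simp [hu2]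
    have h2 := hsub h1
    simp only [mem_sdiff, mem_univ, true_and, Finset.mem_union] at h2
    exact h2 (Or.inr hu)

/-- Optimal number of moves in the total domination game on `G` with the vertices of `D`
already totally dominated; `turn = true` means Dominator (the minimizer) moves next,
`turn = false` means Staller (the maximizer) moves next.  The game ends when no legal
move remains (for graphs without isolated vertices this means every vertex is totally
dominated). -/
noncomputable def gtVal (G : SimpleGraph V) (turn : Bool) (D : Finset V) : ℕ :=
  if h : (movesF G D).Nonempty then
    if turn then
      1 + ((movesF G D).attach.inf' (by simpa using h)
        fun v => gtVal G false (D ∪ nbr G v.1))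
    else
      1 + ((movesF G D).attach.sup' (by simpa using h)
        fun v => gtVal G true (D ∪ nbr G v.1))
  else 0
termination_by ((univ : Finset V) \ D).card
decreasing_by
  · exact movesF_card G D v.2
  · exact movesF_card G D v.2

/-- The game total domination number `γ_g^t(G|D)` (Dominator-start, `D` predominated). -/
noncomputable def gtD (G : SimpleGraph V) (D : Finset V := ∅) : ℕ := gtVal G true D

/-- The Staller-start game total domination number `γ_g^t'(G|D)`. -/
noncomputable def gtS (G : SimpleGraph V) (D : Finset V := ∅) : ℕ := gtVal G false D

/-- `G` has no isolated vertices. -/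
def NoIsolated (G : SimpleGraph V) : Prop := ∀ v : V, ∃ w, G.Adj v w

/-- The graph obtained from the complete graph `K_{k+2}` on `{u, v, x₁, …, x_k}`
(here `u = 0`, `v = 1`, `xᵢ = 1 + i` for `i = 1, …, k`) by attaching a pendant leaf `yᵢ = xᵢ + k`
to `xᵢ` for each `i ∈ [k]`. -/
def cliqueWithLeaves (k : ℕ) : SimpleGraph (Fin (2 * k + 2)) :=
  SimpleGraph.fromRel (fun a b =>
    ((a : ℕ) < k + 2 ∧ (b : ℕ) < k + 2) ∨
    ((b : ℕ) = (a : ℕ) + k ∧ 2 ≤ (a : ℕ) ∧ (a : ℕ) < k + 2))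

/-!
A leaf `yᵢ` is totally dominated only by its support `xᵢ`, and a move dominates at most one leaf,
so a play needs at least `k` moves, and Staller forces one more: by opening at the leafless `u`, or,
after Dominator opens at some `xᵢ`, by answering at `yᵢ`. Conversely a play never lasts longer
than the number of undominated vertices. After Dominator opens at a support vertex only that
vertex and `k - 1` leaves are undominated; after any Staller opening that is not a support vertex,
Dominator answers at a support vertex in its neighbourhood, after which only `k - 1` leaves
remain. Removing `v` leaves a clique with `k` pendant leaves and the leafless `u`, so the same
argument applies to `G - v`.
-/

section GameValue

variable {G : SimpleGraph V} {D : Finset V} {u w : V}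

lemma mem_nbr : u ∈ nbr G w ↔ G.Adj w u := by simp [nbr]

lemma mem_movesF : w ∈ movesF G D ↔ ∃ u, G.Adj w u ∧ u ∉ D := by
  simp [movesF, Finset.not_subset, mem_nbr]

lemma gtVal_eq_zero_of_not_nonempty (h : ¬ (movesF G D).Nonempty) (t : Bool) :
    gtVal G t D = 0 := by
  rw [gtVal, dif_neg h]

lemma exists_gtVal_eq (h : (movesF G D).Nonempty) (t : Bool) :
    ∃ w ∈ movesF G D, gtVal G t D = 1 + gtVal G (!t) (D ∪ nbr G w) := by
  have hA : (movesF G D).attach.Nonempty := attach_nonempty_iff.2 h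
  rw [gtVal, dif_pos h]
  cases t
  · obtain ⟨⟨w, hw⟩, -, hmax⟩ := exists_mem_eq_sup' hA
      fun v : movesF G D => gtVal G true (D ∪ nbr G v.1)
    exact ⟨w, hw, by rw [if_neg Bool.false_ne_true, hmax]; rfl⟩
  · obtain ⟨⟨w, hw⟩, -, hmin⟩ := exists_mem_eq_inf' hA
      fun v : movesF G D => gtVal G false (D ∪ nbr G v.1)
    exact ⟨w, hw, by rw [if_pos rfl, hmin]; rfl⟩

lemma gtVal_true_le (hw : w ∈ movesF G D) :
    gtVal G true D ≤ 1 + gtVal G false (D ∪ nbr G w) := by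
  rw [gtVal, dif_pos ⟨w, hw⟩, if_pos rfl]
  exact Nat.add_le_add_left (inf'_le _ (mem_attach _ ⟨w, hw⟩)) 1

lemma le_gtVal_false (hw : w ∈ movesF G D) :
    1 + gtVal G true (D ∪ nbr G w) ≤ gtVal G false D := by
  conv_rhs => rw [gtVal, dif_pos ⟨w, hw⟩, if_neg Bool.false_ne_true]
  exact Nat.add_le_add_left (le_sup' (fun v : movesF G D => gtVal G true (D ∪ nbr G v.1))
    (mem_attach _ ⟨w, hw⟩)) 1

theorem gtVal_le_card_sdiff (t : Bool) (D : Finset V) : gtVal G t D ≤ #(univ \ D) := by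
  by_cases h : (movesF G D).Nonempty
  · obtain ⟨w, hw, hval⟩ := exists_gtVal_eq h t
    have := gtVal_le_card_sdiff (!t) (D ∪ nbr G w)
    have := movesF_card G D hw
    omega
  · simp [gtVal_eq_zero_of_not_nonempty h]
termination_by #(univ \ D)
decreasing_by exact movesF_card G D hw

lemma card_sdiff_le_card_sdiff_union_nbr_add_one {L : Finset V} (hL : #(nbr G w ∩ L) ≤ 1) :
    #(L \ D) ≤ #(L \ (D ∪ nbr G w)) + 1 := by
  have hsub : L \ D ⊆ L \ (D ∪ nbr G w) ∪ nbr G w ∩ L := by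
    intro y hy
    by_cases hyw : y ∈ nbr G w <;> simp_all
  have := (card_le_card hsub).trans (card_union_le _ _)
  omega

theorem card_sdiff_le_gtVal {L : Finset V} (hL : ∀ w, #(nbr G w ∩ L) ≤ 1)
    (hdom : ∀ y ∈ L, ∃ w, G.Adj w y) (t : Bool) (D : Finset V) :
    #(L \ D) ≤ gtVal G t D := by
  by_cases h : (movesF G D).Nonempty
  · obtain ⟨w, hw, hval⟩ := exists_gtVal_eq h t
    have := card_sdiff_le_gtVal hL hdom (!t) (D ∪ nbr G w)
    have := card_sdiff_le_card_sdiff_union_nbr_add_one (D := D) (hL w)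
    omega
  · suffices L \ D = ∅ by simp [this]
    refine eq_empty_of_forall_notMem fun y hy => h ?_
    obtain ⟨w, hwy⟩ := hdom y (mem_sdiff.1 hy).1
    exact ⟨w, mem_movesF.2 ⟨y, hwy, (mem_sdiff.1 hy).2⟩⟩
termination_by #(univ \ D)
decreasing_by exact movesF_card G D hw

end GameValue

/-- Labels `< c` span a clique, and a vertex labelled `i ≥ c` is a pendant leaf attached to the
vertex labelled `i - m`. -/
structure IsCliqueWithLeaves {W : Type*} (G : SimpleGraph W) (c m : ℕ) (lab : W → ℕ) : Prop where
  injective : Function.Injective lab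
  lab_lt : ∀ v, lab v < c + m
  exists_lab : ∀ i < c + m, ∃ v, lab v = i
  adj_iff : ∀ a b, G.Adj a b ↔ (lab a < c ∧ lab b < c ∧ lab a ≠ lab b) ∨
    (lab b = lab a + m ∧ c ≤ lab b) ∨ (lab a = lab b + m ∧ c ≤ lab a)

namespace IsCliqueWithLeaves

section Adjacency

variable {W : Type*} {G : SimpleGraph W} {c m : ℕ} {lab : W → ℕ} {w x y : W}

lemma adj_clique (hG : IsCliqueWithLeaves G c m lab) (hw : lab w < c) (hx : lab x < c)
    (hne : lab w ≠ lab x) : G.Adj w x :=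
  (hG.adj_iff w x).2 (Or.inl ⟨hw, hx, hne⟩)

lemma adj_leaf_iff (hG : IsCliqueWithLeaves G c m lab) (hy : c ≤ lab y) :
    G.Adj w y ↔ lab y = lab w + m := by
  have := hG.lab_lt w
  have := hG.lab_lt y
  rw [hG.adj_iff]
  omega

end Adjacency

def leaves (c : ℕ) (lab : V → ℕ) : Finset V := univ.filter (c ≤ lab ·)

variable {G : SimpleGraph V} {c m : ℕ} {lab : V → ℕ} {w x y : V}

lemma mem_leaves : y ∈ leaves c lab ↔ c ≤ lab y := by simp [leaves]

lemma card_leaves (hG : IsCliqueWithLeaves G c m lab) : #(leaves c lab) = m := by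
  have himage : (leaves c lab).image lab = Ico c (c + m) := by
    ext i
    simp only [mem_image, mem_leaves, mem_Ico]
    constructor
    · rintro ⟨v, hv, rfl⟩
      exact ⟨hv, hG.lab_lt v⟩
    · rintro ⟨hci, hi⟩
      obtain ⟨v, rfl⟩ := hG.exists_lab i hi
      exact ⟨v, hci, rfl⟩
  rw [← card_image_of_injective _ hG.injective, himage, Nat.card_Ico]
  omega

lemma card_nbr_inter_leaves_le_one (hG : IsCliqueWithLeaves G c m lab) (w : V) :
    #(nbr G w ∩ leaves c lab) ≤ 1 := by
  refine card_le_one.2 fun y hy z hz => hG.injective ?_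
  simp only [mem_inter, mem_nbr, mem_leaves] at hy hz
  rw [(hG.adj_leaf_iff hy.2).1 hy.1, (hG.adj_leaf_iff hz.2).1 hz.1]

lemma exists_adj_of_mem_leaves (hG : IsCliqueWithLeaves G c m lab) (hc : m ≤ c)
    (hy : y ∈ leaves c lab) : ∃ w, G.Adj w y := by
  rw [mem_leaves] at hy
  obtain ⟨w, hw⟩ := hG.exists_lab (lab y - m) (by have := hG.lab_lt y; omega)
  exact ⟨w, (hG.adj_leaf_iff hy).2 (by omega)⟩

lemma disjoint_nbr_leaves (hG : IsCliqueWithLeaves G c m lab)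
    (hw : ¬ (lab w < c ∧ c ≤ lab w + m)) : Disjoint (nbr G w) (leaves c lab) := by
  refine disjoint_left.2 fun y hwy hy => ?_
  rw [mem_nbr, hG.adj_leaf_iff (mem_leaves.1 hy)] at hwy
  have := hG.lab_lt y
  have := mem_leaves.1 hy
  omega

lemma compl_nbr_subset (hG : IsCliqueWithLeaves G c m lab) (hx : lab x < c)
    (hy : lab y = lab x + m) : univ \ nbr G x ⊆ insert x ((leaves c lab).erase y) := by
  intro z hz
  simp only [mem_sdiff, mem_univ, true_and, mem_nbr] at hz
  simp only [mem_insert, mem_erase, mem_leaves]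
  by_cases hzc : lab z < c
  · exact Or.inl (hG.injective (by_contra fun hne => hz (hG.adj_clique hx hzc (Ne.symm hne))))
  · refine Or.inr ⟨?_, by omega⟩
    rintro rfl
    exact hz ((hG.adj_leaf_iff (by omega)).2 hy)

lemma card_compl_nbr_le (hG : IsCliqueWithLeaves G c m lab) (hm : 1 ≤ m) (hx : lab x < c)
    (hy : lab y = lab x + m) (hyc : c ≤ lab y) : #(univ \ nbr G x) ≤ m := by
  have := card_le_card (hG.compl_nbr_subset hx hy)
  have := card_insert_le x ((leaves c lab).erase y)
  rw [card_erase_of_mem (mem_leaves.2 hyc), hG.card_leaves] at *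
  omega

lemma card_sdiff_union_nbr_le (hG : IsCliqueWithLeaves G c m lab) (hx : lab x < c)
    (hy : lab y = lab x + m) (hyc : c ≤ lab y) {D : Finset V} (hxD : x ∈ D) :
    #(univ \ (D ∪ nbr G x)) ≤ m - 1 := by
  have hsub : univ \ (D ∪ nbr G x) ⊆ (leaves c lab).erase y := by
    intro z hz
    have hz' := hG.compl_nbr_subset hx hy (sdiff_subset_sdiff le_rfl subset_union_right hz)
    rcases mem_insert.1 hz' with rfl | h
    · simp [hxD] at hz
    · exact h
  have := card_le_card hsub
  rwa [card_erase_of_mem (mem_leaves.2 hyc), hG.card_leaves] at this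

lemma gtVal_true_empty_le (hG : IsCliqueWithLeaves G c m lab) (hm : 1 ≤ m) (hc : m < c) :
    gtVal G true ∅ ≤ m + 1 := by
  obtain ⟨x, hx⟩ := hG.exists_lab (c - 1) (by omega)
  obtain ⟨y, hy⟩ := hG.exists_lab (c - 1 + m) (by omega)
  have hxy : G.Adj x y := (hG.adj_leaf_iff (by omega)).2 (by omega)
  calc gtVal G true ∅
      ≤ 1 + gtVal G false (∅ ∪ nbr G x) := gtVal_true_le (mem_movesF.2 ⟨y, hxy, notMem_empty y⟩)
    _ ≤ 1 + #(univ \ (∅ ∪ nbr G x)) := by grw [gtVal_le_card_sdiff]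
    _ ≤ m + 1 := by
      rw [empty_union]
      grw [hG.card_compl_nbr_le (x := x) (y := y) hm (by omega) (by omega) (by omega)]
      omega

lemma movesF_empty_nonempty (hG : IsCliqueWithLeaves G c m lab) (hc : 1 < c) :
    (movesF G ∅).Nonempty := by
  obtain ⟨u, hu⟩ := hG.exists_lab 0 (by omega)
  obtain ⟨v, hv⟩ := hG.exists_lab 1 (by omega)
  exact ⟨u, mem_movesF.2 ⟨v, hG.adj_clique (by omega) (by omega) (by omega), notMem_empty v⟩⟩

lemma gtVal_false_empty_le (hG : IsCliqueWithLeaves G c m lab) (hm : 1 ≤ m) (hc : m < c) :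
    gtVal G false ∅ ≤ m + 1 := by
  obtain ⟨w, -, hval⟩ := exists_gtVal_eq (hG.movesF_empty_nonempty (by omega)) false
  rw [empty_union, Bool.not_false] at hval
  suffices gtVal G true (nbr G w) ≤ m by omega
  by_cases hw : lab w < c ∧ c ≤ lab w + m
  · obtain ⟨y, hy⟩ := hG.exists_lab (lab w + m) (by omega)
    exact (gtVal_le_card_sdiff true _).trans
      (by simpa using hG.card_compl_nbr_le hm hw.1 hy (by omega))
  -- Dominator answers at a support vertex `x ∈ N(w)`: then the whole clique is dominated
  obtain ⟨x, hxc, hxm, hwx⟩ : ∃ x, lab x < c ∧ c ≤ lab x + m ∧ G.Adj w x := by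
    by_cases hwc : lab w < c
    · obtain ⟨x, hx⟩ := hG.exists_lab (c - 1) (by omega)
      exact ⟨x, by omega, by omega, hG.adj_clique hwc (by omega) (by omega)⟩
    · obtain ⟨x, hx⟩ := hG.exists_lab (lab w - m) (by have := hG.lab_lt w; omega)
      exact ⟨x, by have := hG.lab_lt w; omega, by omega,
        G.adj_symm ((hG.adj_leaf_iff (by omega)).2 (by omega))⟩
  obtain ⟨y, hy⟩ := hG.exists_lab (lab x + m) (by omega)
  have hyw : y ∉ nbr G w :=
    disjoint_right.1 (hG.disjoint_nbr_leaves hw) (mem_leaves.2 (by omega))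
  have hxy : G.Adj x y := (hG.adj_leaf_iff (by omega)).2 hy
  calc gtVal G true (nbr G w)
      ≤ 1 + gtVal G false (nbr G w ∪ nbr G x) := gtVal_true_le (mem_movesF.2 ⟨y, hxy, hyw⟩)
    _ ≤ 1 + #(univ \ (nbr G w ∪ nbr G x)) := by grw [gtVal_le_card_sdiff]
    _ ≤ 1 + (m - 1) := by grw [hG.card_sdiff_union_nbr_le hxc hy (by omega) (mem_nbr.2 hwx)]
    _ = m := by omega

lemma card_leaves_sdiff_le_gtVal (hG : IsCliqueWithLeaves G c m lab) (hc : m ≤ c) (t : Bool)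
    (D : Finset V) : #(leaves c lab \ D) ≤ gtVal G t D :=
  card_sdiff_le_gtVal hG.card_nbr_inter_leaves_le_one
    (fun _ hy => hG.exists_adj_of_mem_leaves hc hy) t D

lemma le_gtVal_false_empty (hG : IsCliqueWithLeaves G c m lab) (hm : 1 ≤ m) (hc : m < c) :
    m + 1 ≤ gtVal G false ∅ := by
  obtain ⟨u, hu⟩ := hG.exists_lab 0 (by omega)
  obtain ⟨v, hv⟩ := hG.exists_lab 1 (by omega)
  have huv : G.Adj u v := hG.adj_clique (by omega) (by omega) (by omega)
  have hleaves : leaves c lab \ nbr G u = leaves c lab :=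
    (hG.disjoint_nbr_leaves (by omega)).symm.sdiff_eq_left
  calc m + 1
      = #(leaves c lab \ nbr G u) + 1 := by rw [hleaves, hG.card_leaves]
    _ ≤ gtVal G true (nbr G u) + 1 := by grw [hG.card_leaves_sdiff_le_gtVal hc.le]
    _ ≤ gtVal G false ∅ := by
      simpa [add_comm] using le_gtVal_false (mem_movesF.2 ⟨v, huv, notMem_empty v⟩)

lemma le_gtVal_true_empty (hG : IsCliqueWithLeaves G c m lab) (hm : 1 ≤ m) (hc : m < c) :
    m + 1 ≤ gtVal G true ∅ := by
  obtain ⟨w, -, hval⟩ := exists_gtVal_eq (hG.movesF_empty_nonempty (by omega)) true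
  rw [empty_union, Bool.not_true] at hval
  suffices m ≤ gtVal G false (nbr G w) by omega
  have hstep := card_sdiff_le_card_sdiff_union_nbr_add_one (D := ∅)
    (hG.card_nbr_inter_leaves_le_one w)
  rw [sdiff_empty, empty_union, hG.card_leaves] at hstep
  by_cases hw : lab w < c ∧ c ≤ lab w + m
  -- Staller answers at the leaf `y` of `w`, which dominates no leaf
  · obtain ⟨y, hy⟩ := hG.exists_lab (lab w + m) (by omega)
    have hwy : G.Adj w y := (hG.adj_leaf_iff (by omega)).2 hy
    have hy_move : y ∈ movesF G (nbr G w) := mem_movesF.2 ⟨w, hwy.symm, by simp [mem_nbr]⟩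
    have hleaves : leaves c lab \ (nbr G w ∪ nbr G y) = leaves c lab \ nbr G w := by
      rw [sdiff_union_distrib, (hG.disjoint_nbr_leaves (w := y) (by omega)).symm.sdiff_eq_left,
        inter_eq_left.2 sdiff_subset]
    have := hG.card_leaves_sdiff_le_gtVal hc.le true (nbr G w ∪ nbr G y)
    rw [hleaves] at this
    have := le_gtVal_false hy_move
    omega
  · have hleaves : leaves c lab \ nbr G w = leaves c lab :=
      (hG.disjoint_nbr_leaves hw).symm.sdiff_eq_left
    simpa [hleaves, hG.card_leaves] using hG.card_leaves_sdiff_le_gtVal hc.le false (nbr G w)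

lemma gtVal_empty_eq (hG : IsCliqueWithLeaves G c m lab) (hm : 1 ≤ m) (hc : m < c) (t : Bool) :
    gtVal G t ∅ = m + 1 := by
  cases t
  · exact le_antisymm (hG.gtVal_false_empty_le hm hc) (hG.le_gtVal_false_empty hm hc)
  · exact le_antisymm (hG.gtVal_true_empty_le hm hc) (hG.le_gtVal_true_empty hm hc)

end IsCliqueWithLeaves

lemma isCliqueWithLeaves_cliqueWithLeaves (k : ℕ) :
    IsCliqueWithLeaves (cliqueWithLeaves k) (k + 2) k Fin.val where
  injective := Fin.val_injective
  lab_lt v := by have := v.isLt; omega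
  exists_lab i hi := ⟨⟨i, by omega⟩, rfl⟩
  adj_iff a b := by
    rw [cliqueWithLeaves, SimpleGraph.fromRel_adj, ne_eq, Fin.ext_iff]
    omega

/-- Truncated subtraction keeps `u = 0` at label `0`, and `v = 1` is the removed vertex. -/
lemma isCliqueWithLeaves_induce (k : ℕ) :
    IsCliqueWithLeaves ((cliqueWithLeaves k).induce {u | u ≠ ⟨1, by omega⟩}) (k + 1) k
      (fun u => (u.1 : ℕ) - 1) := by
  have hval (u : {u : Fin (2 * k + 2) | u ≠ ⟨1, by omega⟩}) : (u.1 : ℕ) ≠ 1 :=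
    fun h => u.2 (Fin.ext h)
  refine ⟨fun u v h => ?_, fun v => ?_, fun i hi => ?_, fun a b => ?_⟩
  · have := hval u
    have := hval v
    exact Subtype.ext (Fin.ext (by omega))
  · have := v.1.isLt
    omega
  · rcases Nat.eq_zero_or_pos i with rfl | hpos
    · exact ⟨⟨⟨0, by omega⟩, by simp [Fin.ext_iff]⟩, rfl⟩
    · exact ⟨⟨⟨i + 1, by omega⟩, by simp [Fin.ext_iff]; omega⟩, by simp⟩
  · have := hval a
    have := hval b
    simp only [SimpleGraph.comap_adj, Function.Embedding.coe_subtype, cliqueWithLeaves,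
      SimpleGraph.fromRel_adj, ne_eq, Fin.ext_iff]
    omega

/-- For `k ≥ 1`, the graph `G` above satisfies
`γ_g^t(G) = γ_g^t(G − v) = k + 1` and `γ_g^t'(G) = γ_g^t'(G − v) = k + 1`,
where `v = 1` is one of the two clique vertices without a pendant leaf. -/
theorem gtD_cliqueWithLeaves (k : ℕ) (hk : 1 ≤ k) :
    gtD (cliqueWithLeaves k) = k + 1 ∧
    gtD ((cliqueWithLeaves k).induce {u | u ≠ ⟨1, by omega⟩}) = k + 1 ∧
    gtS (cliqueWithLeaves k) = k + 1 ∧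
    gtS ((cliqueWithLeaves k).induce {u | u ≠ ⟨1, by omega⟩}) = k + 1 := by
  have hG := (isCliqueWithLeaves_cliqueWithLeaves k).gtVal_empty_eq hk (by omega)
  have hGv := (isCliqueWithLeaves_induce k).gtVal_empty_eq hk (by omega)
  exact ⟨hG true, hGv true, hG false, hGv false⟩
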